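/- For 1 ≤ k ≤ N and 0 ≤ γ ≤ N, the probability that the component of a fixed vertex in G_{N,γ/N} has size exactly k is at most (k^{k−1}/k!)·γ^{k−1}·e^{−kγ + γk²/N}. -/

import Mathlib

/-- The probability of an event `A` when each coordinate `e : E` is an
independent Bernoulli(`p`) bit. -/
noncomputable def bernoulliPr {E : Type*} [Fintype E] [DecidableEq E]
    (p : ℝ) (A : Set (E → Bool)) : ℝ :=
  ∑ ω : E → Bool,
    Set.indicator A (fun ω' => ∏ e : E, if ω' e = true then p else 1 - p) ω

/-- The random graph `G_{N,q}` encoded by a configuration of edge-bits. -/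
def graphOf {N : ℕ} (η : Sym2 (Fin N) → Bool) : SimpleGraph (Fin N) :=
  SimpleGraph.fromRel fun a b => η s(a, b) = true

/-! If the component of `x` is a `k`-set `S`, then a breadth-first spanning tree of `S` rooted
at `x` (each vertex pointing to a neighbour closer to `x`) has its `k - 1` edges open, while the
`k (N - k)` edges leaving `S` are closed. A union bound over the `C(N-1, k-1)` choices of `S` and
the at most `k ^ (k - 2)` rooted trees on `S` (Cayley's bound, by injectivity of the Prüfer code)
gives `C(N-1, k-1) k^(k-2) p^(k-1) (1-p)^(k(N-k))`; then `C(N-1, k-1) ≤ N^(k-1)/(k-1)!` and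
`1 - p ≤ e^(-p)`. -/

open Finset

section Bernoulli

variable {E : Type*} [Fintype E] [DecidableEq E] {p : ℝ}

theorem bernoulliPr_le_sum (hp0 : 0 ≤ p) (hp1 : p ≤ 1) {A : Set (E → Bool)} {ι : Type*}
    (I : Finset ι) (B : ι → Set (E → Bool)) (hA : A ⊆ ⋃ i ∈ I, B i) :
    bernoulliPr p A ≤ ∑ i ∈ I, bernoulliPr p (B i) := by
  unfold bernoulliPr
  set w : (E → Bool) → ℝ := fun ω => ∏ e, if ω e = true then p else 1 - p
  have hw : ∀ ω, 0 ≤ w ω := fun ω => prod_nonneg fun e _ => by split_ifs <;> linarith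
  rw [sum_comm]
  refine sum_le_sum fun ω _ => ?_
  by_cases hω : ω ∈ A
  · obtain ⟨i, hi, hωi⟩ := Set.mem_iUnion₂.1 (hA hω)
    rw [Set.indicator_of_mem hω, ← Set.indicator_of_mem hωi w]
    exact single_le_sum (f := fun i => (B i).indicator w ω)
      (fun j _ => Set.indicator_nonneg (fun ω' _ => hw ω') ω) hi
  · rw [Set.indicator_of_notMem hω]
    exact sum_nonneg fun i _ => Set.indicator_nonneg (fun ω' _ => hw ω') ω

theorem bernoulliPr_setOf_forall_mem (t : E → Finset Bool) :
    bernoulliPr p {ω | ∀ e, ω e ∈ t e} =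
      ∏ e, ∑ b ∈ t e, if b = true then p else 1 - p := by
  rw [prod_univ_sum, bernoulliPr, sum_indicator_eq_sum_filter]
  congr 1
  ext ω
  simp

theorem bernoulliPr_cylinder {T X : Finset E} (hTX : Disjoint T X) :
    bernoulliPr p {ω | (∀ e ∈ T, ω e = true) ∧ ∀ e ∈ X, ω e = false} =
      p ^ T.card * (1 - p) ^ X.card := by
  let t : E → Finset Bool := fun e =>
    univ.filter fun b => (e ∈ T → b = true) ∧ (e ∈ X → b = false)
  have hset : {ω : E → Bool | (∀ e ∈ T, ω e = true) ∧ ∀ e ∈ X, ω e = false} =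
      {ω | ∀ e, ω e ∈ t e} := by
    ext ω
    simp only [t, Set.mem_ofPred_eq, mem_filter, mem_univ, true_and, forall_and]
  have hsum : ∀ e, ∑ b ∈ t e, (if b = true then p else 1 - p) =
      (if e ∈ T then p else 1) * (if e ∈ X then 1 - p else 1) := by
    intro e
    by_cases heT : e ∈ T
    · simp [t, heT, disjoint_left.1 hTX heT, sum_filter]
    · by_cases heX : e ∈ X <;> simp [t, heT, heX, sum_filter]
  rw [hset, bernoulliPr_setOf_forall_mem, prod_congr rfl fun e _ => hsum e, prod_mul_distrib,
    prod_ite_mem, prod_ite_mem, univ_inter, univ_inter, prod_const, prod_const]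

end Bernoulli

section RootedTree

variable {α : Type*} [DecidableEq α] {S : Finset α} {x v : α} {f : α → α}

/-- `f` is the parent map of a tree on `S` rooted at `x`; its values off `S.erase x` are
irrelevant. -/
structure IsRootedTree (S : Finset α) (x : α) (f : α → α) : Prop where
  root_mem : x ∈ S
  mapsTo : ∀ v ∈ S.erase x, f v ∈ S
  reaches : ∀ v ∈ S, ∃ n, f^[n] v = x

theorem IsRootedTree.of_height (hx : x ∈ S) (hmaps : ∀ v ∈ S.erase x, f v ∈ S)
    (d : α → ℕ) (hd : ∀ v ∈ S.erase x, d (f v) < d v) : IsRootedTree S x f := by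
  refine ⟨hx, hmaps, fun v hv => ?_⟩
  induction hn : d v using Nat.strong_induction_on generalizing v with
  | _ n ih =>
    by_cases hvx : v = x
    · exact ⟨0, hvx⟩
    · have hv' : v ∈ S.erase x := mem_erase.2 ⟨hvx, hv⟩
      obtain ⟨m, hm⟩ := ih _ (hn ▸ hd v hv') _ (hmaps v hv') rfl
      exact ⟨m + 1, hm⟩

def leafSet (S : Finset α) (x : α) (f : α → α) : Finset α :=
  S.erase x \ (S.erase x).image f

theorem leafSet_subset : leafSet S x f ⊆ S.erase x := sdiff_subset

namespace IsRootedTree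

theorem apply_ne_self (h : IsRootedTree S x f) (hv : v ∈ S.erase x) : f v ≠ v := by
  intro hfv
  obtain ⟨n, hn⟩ := h.reaches v (mem_of_mem_erase hv)
  exact ne_of_mem_erase hv (Function.iterate_fixed hfv n ▸ hn)

theorem apply_apply_ne_self (h : IsRootedTree S x f) (hv : v ∈ S.erase x) (hfv : f v ≠ x) :
    f (f v) ≠ v := by
  intro hffv
  obtain ⟨n, hn⟩ := h.reaches v (mem_of_mem_erase hv)
  have hper : Function.IsPeriodicPt f 2 v := hffv
  rw [← hper.iterate_mod_apply] at hn
  have : n % 2 < 2 := Nat.mod_lt _ two_pos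
  interval_cases n % 2
  · exact ne_of_mem_erase hv hn
  · exact hfv hn

theorem apply_eq_root (h : IsRootedTree S x f) (hS : S.card ≤ 2) (hv : v ∈ S.erase x) :
    f v = x := by
  by_contra hfx
  have : 2 < S.card := two_lt_card.2 ⟨x, h.root_mem, v, mem_of_mem_erase hv, f v, h.mapsTo v hv,
    (ne_of_mem_erase hv).symm, Ne.symm hfx, (h.apply_ne_self hv).symm⟩
  omega

theorem leafSet_nonempty (h : IsRootedTree S x f) (hS : 2 ≤ S.card) :
    (leafSet S x f).Nonempty := by
  obtain ⟨v, hv⟩ : (S.erase x).Nonempty := by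
    rw [← card_pos, card_erase_of_mem h.root_mem]; omega
  by_contra hempty
  rw [not_nonempty_iff_eq_empty, leafSet, sdiff_eq_empty_iff_subset] at hempty
  -- with no leaf, `f` permutes `S.erase x`, so `v` never reaches `x`
  have himage : (S.erase x).image f = S.erase x :=
    (eq_of_subset_of_card_le hempty card_image_le).symm
  have hmaps : Set.MapsTo f (S.erase x : Set α) (S.erase x : Set α) := fun w hw => by
    rw [mem_coe, ← himage]; exact mem_image_of_mem f hw
  obtain ⟨n, hn⟩ := h.reaches v (mem_of_mem_erase hv)
  exact ne_of_mem_erase (hn ▸ hmaps.iterate n hv) rfl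

theorem erase_leaf (h : IsRootedTree S x f) {ℓ : α} (hℓ : ℓ ∈ leafSet S x f) :
    IsRootedTree (S.erase ℓ) x f := by
  obtain ⟨hℓS, hℓf⟩ := mem_sdiff.1 hℓ
  refine ⟨mem_erase.2 ⟨(ne_of_mem_erase hℓS).symm, h.root_mem⟩, fun v hv => ?_,
    fun v hv => h.reaches v (mem_of_mem_erase hv)⟩
  have hv' : v ∈ S.erase x := mem_of_mem_erase (erase_right_comm (s := S) ▸ hv)
  exact mem_erase.2 ⟨fun hfv => hℓf (hfv ▸ mem_image_of_mem f hv'), h.mapsTo v hv'⟩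

end IsRootedTree

open Classical in
/-- Normalising the parent maps off `S.erase x` makes each rooted tree on `S` occur once. -/
noncomputable def rootedTrees [Fintype α] (S : Finset α) (x : α) : Finset (α → α) :=
  univ.filter fun f => IsRootedTree S x f ∧ ∀ v ∉ S.erase x, f v = v

theorem mem_rootedTrees [Fintype α] :
    f ∈ rootedTrees S x ↔ IsRootedTree S x f ∧ ∀ v ∉ S.erase x, f v = v := by
  classical
  simp [rootedTrees]

end RootedTree

section Prufer

variable {α : Type*} [LinearOrder α] {S : Finset α} {x v : α} {f g : α → α}

noncomputable def pruferCode (S : Finset α) (x : α) (f : α → α) : List α :=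
  if h : 2 < S.card ∧ (leafSet S x f).Nonempty then
    f ((leafSet S x f).min' h.2) :: pruferCode (S.erase ((leafSet S x f).min' h.2)) x f
  else []
termination_by S.card
decreasing_by exact card_erase_lt_of_mem (mem_of_mem_erase (leafSet_subset (min'_mem _ h.2)))

theorem pruferCode_of_card_le_two (hS : S.card ≤ 2) : pruferCode S x f = [] := by
  rw [pruferCode, dif_neg (by omega)]

namespace IsRootedTree

theorem exists_pruferCode_eq_cons (h : IsRootedTree S x f) (hS : 2 < S.card) :
    ∃ ℓ, IsLeast (leafSet S x f : Set α) ℓ ∧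
      pruferCode S x f = f ℓ :: pruferCode (S.erase ℓ) x f := by
  have hne := h.leafSet_nonempty hS.le
  exact ⟨_, isLeast_min' _ hne, by rw [pruferCode, dif_pos ⟨hS, hne⟩]⟩

theorem length_pruferCode (h : IsRootedTree S x f) :
    (pruferCode S x f).length = S.card - 2 := by
  induction S using Finset.strongInduction with
  | H S ih =>
    rcases le_or_gt S.card 2 with hS | hS
    · rw [pruferCode_of_card_le_two hS, List.length_nil]; omega
    · obtain ⟨ℓ, hℓ, hcode⟩ := h.exists_pruferCode_eq_cons hS
      have hℓS := mem_of_mem_erase (leafSet_subset hℓ.1)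
      rw [hcode, List.length_cons, ih _ (erase_ssubset hℓS) (h.erase_leaf hℓ.1),
        card_erase_of_mem hℓS]
      omega

theorem pruferCode_subset (h : IsRootedTree S x f) : ∀ v ∈ pruferCode S x f, v ∈ S := by
  induction S using Finset.strongInduction with
  | H S ih =>
    rcases le_or_gt S.card 2 with hS | hS
    · simp [pruferCode_of_card_le_two hS]
    · obtain ⟨ℓ, hℓ, hcode⟩ := h.exists_pruferCode_eq_cons hS
      have hℓS := mem_of_mem_erase (leafSet_subset hℓ.1)
      rw [hcode]
      rintro v (_ | ⟨_, hv⟩)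
      · exact h.mapsTo ℓ (leafSet_subset hℓ.1)
      · exact mem_of_mem_erase (ih _ (erase_ssubset hℓS) (h.erase_leaf hℓ.1) v hv)

theorem mem_pruferCode_iff (h : IsRootedTree S x f) (hv : v ∈ S.erase x) :
    v ∈ pruferCode S x f ↔ v ∈ (S.erase x).image f := by
  induction S using Finset.strongInduction generalizing v with
  | H S ih =>
    rcases le_or_gt S.card 2 with hS | hS
    · simp only [pruferCode_of_card_le_two hS, List.not_mem_nil, false_iff, mem_image, not_exists,
        not_and]
      exact fun w hw hfw => ne_of_mem_erase hv (hfw ▸ h.apply_eq_root hS hw)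
    · obtain ⟨ℓ, hℓ, hcode⟩ := h.exists_pruferCode_eq_cons hS
      have hℓx := leafSet_subset hℓ.1
      have hℓS := mem_of_mem_erase hℓx
      have himage : (S.erase x).image f = insert (f ℓ) (((S.erase ℓ).erase x).image f) := by
        rw [erase_right_comm, ← image_insert, insert_erase hℓx]
      rw [hcode, List.mem_cons, himage, mem_insert]
      by_cases hvℓ : v = ℓ
      · subst hvℓ
        have hcode : v ∉ pruferCode (S.erase v) x f := fun hv' =>
          notMem_erase v S ((h.erase_leaf hℓ.1).pruferCode_subset v hv')
        have himage : v ∉ ((S.erase v).erase x).image f := fun hv' =>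
          (mem_sdiff.1 hℓ.1).2 (image_subset_image (erase_subset_erase x (erase_subset v S)) hv')
        simp only [hcode, himage, or_false]
      · rw [ih _ (erase_ssubset hℓS) (h.erase_leaf hℓ.1)
          (by rw [erase_right_comm]; exact mem_erase.2 ⟨hvℓ, hv⟩)]

theorem leafSet_eq (h : IsRootedTree S x f) :
    leafSet S x f = (S.erase x).filter (· ∉ pruferCode S x f) := by
  ext v
  rw [leafSet, mem_sdiff, mem_filter, and_congr_right_iff]
  exact fun hv => not_congr (h.mem_pruferCode_iff hv).symm

theorem eqOn_of_pruferCode_eq (hf : IsRootedTree S x f) (hg : IsRootedTree S x g)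
    (hfg : pruferCode S x f = pruferCode S x g) : Set.EqOn f g (S.erase x : Set α) := by
  induction S using Finset.strongInduction with
  | H S ih =>
    rcases le_or_gt S.card 2 with hS | hS
    · exact fun v hv => (hf.apply_eq_root hS hv).trans (hg.apply_eq_root hS hv).symm
    · obtain ⟨ℓ, hℓ, hcode⟩ := hf.exists_pruferCode_eq_cons hS
      obtain ⟨ℓ', hℓ', hcode'⟩ := hg.exists_pruferCode_eq_cons hS
      have hleaf : leafSet S x f = leafSet S x g := by rw [hf.leafSet_eq, hg.leafSet_eq, hfg]
      obtain rfl : ℓ = ℓ' := hℓ.unique (by rwa [hleaf])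
      rw [hcode, hcode', List.cons.injEq] at hfg
      have hℓx := leafSet_subset hℓ.1
      have hrest := ih _ (erase_ssubset (mem_of_mem_erase hℓx)) (hf.erase_leaf hℓ.1)
        (hg.erase_leaf hℓ'.1) hfg.2
      intro v hv
      by_cases hvℓ : v = ℓ
      · exact hvℓ ▸ hfg.1
      · exact hrest (by rw [mem_coe, erase_right_comm]; exact mem_erase.2 ⟨hvℓ, hv⟩)

end IsRootedTree

theorem card_rootedTrees_le [Fintype α] (S : Finset α) (x : α) :
    (rootedTrees S x).card ≤ S.card ^ (S.card - 2) := by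
  let code : (α → α) → Fin (S.card - 2) → α := fun f i => (pruferCode S x f).getD i x
  have hmaps : ∀ f ∈ rootedTrees S x, code f ∈ Fintype.piFinset fun _ => S := by
    intro f hf
    have hf := (mem_rootedTrees.1 hf).1
    refine Fintype.mem_piFinset.2 fun i => ?_
    change (pruferCode S x f).getD i x ∈ S
    by_cases hi : (i : ℕ) < (pruferCode S x f).length
    · rw [List.getD_eq_getElem _ _ hi]
      exact hf.pruferCode_subset _ (List.getElem_mem hi)
    · rw [List.getD_eq_default _ _ (not_lt.1 hi)]
      exact hf.root_mem
  have hinj : Set.InjOn code (rootedTrees S x) := by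
    intro f hf g hg hfg
    obtain ⟨hf, hf'⟩ := mem_rootedTrees.1 hf
    obtain ⟨hg, hg'⟩ := mem_rootedTrees.1 hg
    have hcode : pruferCode S x f = pruferCode S x g := by
      refine List.ext_getElem (by rw [hf.length_pruferCode, hg.length_pruferCode])
        fun i hi hi' => ?_
      have : (pruferCode S x f).getD i x = (pruferCode S x g).getD i x :=
        congrFun hfg ⟨i, hf.length_pruferCode ▸ hi⟩
      rwa [List.getD_eq_getElem _ _ hi, List.getD_eq_getElem _ _ hi'] at this
    funext v
    by_cases hv : v ∈ S.erase x
    · exact hf.eqOn_of_pruferCode_eq hg hcode hv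
    · rw [hf' v hv, hg' v hv]
  calc (rootedTrees S x).card ≤ (Fintype.piFinset fun _ : Fin (S.card - 2) => S).card :=
        card_le_card_of_injOn code hmaps hinj
    _ = S.card ^ (S.card - 2) := by simp

end Prufer

theorem SimpleGraph.Reachable.exists_adj_dist_lt {V : Type*} {G : SimpleGraph V} {x v : V}
    (h : G.Reachable x v) (hne : v ≠ x) : ∃ w, G.Adj v w ∧ G.dist x w < G.dist x v := by
  obtain ⟨p, hp⟩ := h.exists_walk_length_eq_dist
  obtain ⟨w, hadj, q, hq⟩ := SimpleGraph.Walk.exists_eq_cons_of_ne hne p.reverse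
  refine ⟨w, hadj, ?_⟩
  have hdist := SimpleGraph.dist_le q.reverse
  have hlen : p.reverse.length = q.length + 1 := by rw [hq, SimpleGraph.Walk.length_cons]
  rw [SimpleGraph.Walk.length_reverse] at hdist hlen
  omega

theorem SimpleGraph.exists_mem_rootedTrees_adj {V : Type*} [Fintype V] [DecidableEq V]
    (G : SimpleGraph V) {S : Finset V} {x : V} (hS : ∀ y, y ∈ S ↔ G.Reachable x y) :
    ∃ f ∈ rootedTrees S x, ∀ v ∈ S.erase x, G.Adj v (f v) := by
  have hcloser : ∀ v ∈ S.erase x, ∃ w, G.Adj v w ∧ G.dist x w < G.dist x v := fun v hv =>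
    ((hS v).1 (mem_of_mem_erase hv)).exists_adj_dist_lt (ne_of_mem_erase hv)
  choose! f hadj hdist using hcloser
  have hf : ∀ v ∈ S.erase x, (S.erase x).piecewise f id v = f v := fun v hv =>
    piecewise_eq_of_mem _ _ _ hv
  refine ⟨(S.erase x).piecewise f id, mem_rootedTrees.2 ⟨?_, fun v hv =>
    piecewise_eq_of_notMem _ _ _ hv⟩, fun v hv => hf v hv ▸ hadj v hv⟩
  refine IsRootedTree.of_height ((hS x).2 .rfl) (fun v hv => ?_) (G.dist x) fun v hv => ?_
  · rw [hf v hv, hS]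
    exact ((hS v).1 (mem_of_mem_erase hv)).trans (hadj v hv).reachable
  · exact hf v hv ▸ hdist v hv

section Edges

variable {V : Type*} [DecidableEq V] {S : Finset V} {x : V} {f : V → V}

def treeEdges (S : Finset V) (x : V) (f : V → V) : Finset (Sym2 V) :=
  (S.erase x).image fun v => s(v, f v)

def edgeBoundary [Fintype V] (S : Finset V) : Finset (Sym2 V) :=
  (S ×ˢ Sᶜ).image fun e => s(e.1, e.2)

theorem IsRootedTree.card_treeEdges (h : IsRootedTree S x f) :
    (treeEdges S x f).card = S.card - 1 := by
  rw [treeEdges, card_image_of_injOn, card_erase_of_mem h.root_mem]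
  intro v hv w hw hvw
  rcases Sym2.eq_iff.1 hvw with ⟨rfl, -⟩ | ⟨rfl, hwv⟩
  · rfl
  · exact absurd hwv (h.apply_apply_ne_self hw (ne_of_mem_erase hv))

theorem card_edgeBoundary [Fintype V] (S : Finset V) :
    (edgeBoundary S).card = S.card * (Fintype.card V - S.card) := by
  rw [edgeBoundary, card_image_of_injOn, card_product, card_compl]
  rintro ⟨a, b⟩ hab ⟨a', b'⟩ hab' h
  simp only [coe_product, coe_compl, Set.mem_prod, mem_coe, Set.mem_compl_iff] at hab hab'
  rcases Sym2.eq_iff.1 h with ⟨rfl, rfl⟩ | ⟨rfl, -⟩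
  · rfl
  · exact absurd hab.1 hab'.2

theorem IsRootedTree.disjoint_treeEdges_edgeBoundary [Fintype V] (h : IsRootedTree S x f) :
    Disjoint (treeEdges S x f) (edgeBoundary S) := by
  simp only [disjoint_left, treeEdges, edgeBoundary, mem_image, mem_product, mem_compl]
  rintro _ ⟨v, hv, rfl⟩ ⟨⟨a, b⟩, ⟨-, hb⟩, hab⟩
  rcases Sym2.eq_iff.1 hab with ⟨-, rfl⟩ | ⟨-, rfl⟩
  · exact hb (h.mapsTo v hv)
  · exact hb (mem_of_mem_erase hv)

end Edges

theorem graphOf_adj {N : ℕ} (η : Sym2 (Fin N) → Bool) (a b : Fin N) :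
    (graphOf η).Adj a b ↔ a ≠ b ∧ η s(a, b) = true := by
  simp [graphOf, Sym2.eq_swap]

section RandomGraph

variable {N : ℕ} {p : ℝ}

theorem bernoulliPr_reachable_eq_le (hp0 : 0 ≤ p) (hp1 : p ≤ 1) (x : Fin N)
    (S : Finset (Fin N)) :
    bernoulliPr p {η | {y | (graphOf η).Reachable x y} = ↑S} ≤
      S.card ^ (S.card - 2) * (p ^ (S.card - 1) * (1 - p) ^ (S.card * (N - S.card))) := by
  let B : (Fin N → Fin N) → Set (Sym2 (Fin N) → Bool) := fun f =>
    {η | (∀ e ∈ treeEdges S x f, η e = true) ∧ ∀ e ∈ edgeBoundary S, η e = false}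
  have hcover :
      {η | {y | (graphOf η).Reachable x y} = ↑S} ⊆ ⋃ f ∈ rootedTrees S x, B f := by
    intro η hη
    have hS : ∀ y, y ∈ S ↔ (graphOf η).Reachable x y := fun y => by
      rw [← mem_coe, ← hη, Set.mem_ofPred_eq]
    obtain ⟨f, hf, hadj⟩ := (graphOf η).exists_mem_rootedTrees_adj hS
    refine Set.mem_iUnion₂.2 ⟨f, hf, ?_, ?_⟩
    · simp only [treeEdges, mem_image]
      rintro _ ⟨v, hv, rfl⟩
      exact ((graphOf_adj η _ _).1 (hadj v hv)).2
    · simp only [edgeBoundary, mem_image, mem_product, mem_compl]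
      rintro _ ⟨⟨a, b⟩, ⟨ha, hb⟩, rfl⟩
      by_contra hab
      have hadj : (graphOf η).Adj a b :=
        (graphOf_adj η a b).2 ⟨fun h => hb (h ▸ ha), Bool.not_eq_false _ ▸ hab⟩
      exact hb ((hS b).2 (((hS a).1 ha).trans hadj.reachable))
  have hprob : ∀ f ∈ rootedTrees S x,
      bernoulliPr p (B f) = p ^ (S.card - 1) * (1 - p) ^ (S.card * (N - S.card)) := by
    intro f hf
    have hf := (mem_rootedTrees.1 hf).1
    rw [bernoulliPr_cylinder hf.disjoint_treeEdges_edgeBoundary, hf.card_treeEdges,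
      card_edgeBoundary, Fintype.card_fin]
  calc bernoulliPr p {η | {y | (graphOf η).Reachable x y} = ↑S}
      ≤ ∑ f ∈ rootedTrees S x, bernoulliPr p (B f) := bernoulliPr_le_sum hp0 hp1 _ _ hcover
    _ = (rootedTrees S x).card * (p ^ (S.card - 1) * (1 - p) ^ (S.card * (N - S.card))) := by
      rw [sum_congr rfl hprob, sum_const, nsmul_eq_mul]
    _ ≤ _ := mul_le_mul_of_nonneg_right (by exact_mod_cast card_rootedTrees_le S x)
      (mul_nonneg (pow_nonneg hp0 _) (pow_nonneg (sub_nonneg.2 hp1) _))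

theorem bernoulliPr_ncard_reachable_le {k : ℕ} (hp0 : 0 ≤ p) (hp1 : p ≤ 1)
    (hk : 1 ≤ k) (x : Fin N) :
    bernoulliPr p {η | {y | (graphOf η).Reachable x y}.ncard = k} ≤
      (N - 1).choose (k - 1) * k ^ (k - 2) * (p ^ (k - 1) * (1 - p) ^ (k * (N - k))) := by
  have hcover : {η | {y | (graphOf η).Reachable x y}.ncard = k} ⊆
      ⋃ S ∈ (univ.erase x).powersetCard (k - 1),
        {η | {y | (graphOf η).Reachable x y} = ↑(insert x S)} := by
    classical
    intro η hη
    set C := univ.filter ((graphOf η).Reachable x)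
    have hC : {y | (graphOf η).Reachable x y} = ↑C := by ext; simp [C]
    have hxC : x ∈ C := mem_filter.2 ⟨mem_univ x, .rfl⟩
    have hcard : C.card = k := by rw [← hη, hC, Set.ncard_coe_finset]
    refine Set.mem_iUnion₂.2 ⟨C.erase x, mem_powersetCard.2
      ⟨erase_subset_erase x (subset_univ C), by rw [card_erase_of_mem hxC, hcard]⟩, ?_⟩
    rw [Set.mem_ofPred_eq, insert_erase hxC, hC]
  have hterm : ∀ S ∈ (univ.erase x).powersetCard (k - 1),
      bernoulliPr p {η | {y | (graphOf η).Reachable x y} = ↑(insert x S)} ≤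
        k ^ (k - 2) * (p ^ (k - 1) * (1 - p) ^ (k * (N - k))) := by
    intro S hS
    obtain ⟨hSx, hScard⟩ := mem_powersetCard.1 hS
    have hcard : (insert x S).card = k := by
      rw [card_insert_of_notMem fun hx => (mem_erase.1 (hSx hx)).1 rfl, hScard]
      omega
    simpa only [hcard] using bernoulliPr_reachable_eq_le hp0 hp1 x (insert x S)
  calc _ ≤ _ := bernoulliPr_le_sum hp0 hp1 _ _ hcover
    _ ≤ _ := sum_le_sum hterm
    _ = _ := by
      rw [sum_const, card_powersetCard, card_erase_of_mem (mem_univ x), card_univ,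
        Fintype.card_fin, nsmul_eq_mul, mul_assoc]

end RandomGraph

theorem one_sub_div_pow_le_exp {N k : ℕ} {γ : ℝ} (hN : 0 < N) (hγN : γ ≤ N)
    (hkN : k ≤ N) :
    (1 - γ / N) ^ (k * (N - k)) ≤ Real.exp (-(k : ℝ) * γ + γ * (k : ℝ) ^ 2 / N) := by
  have hp1 : 0 ≤ 1 - γ / N := sub_nonneg.2 ((div_le_one (by exact_mod_cast hN)).2 hγN)
  calc (1 - γ / N) ^ (k * (N - k)) ≤ Real.exp (-(γ / N)) ^ (k * (N - k)) :=
        pow_le_pow_left₀ hp1 (Real.one_sub_le_exp_neg _) _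
    _ = Real.exp (-(k : ℝ) * γ + γ * (k : ℝ) ^ 2 / N) := by
      rw [← Real.exp_nat_mul]
      congr 1
      push_cast [Nat.cast_sub hkN]
      field_simp
      ring

theorem pow_sub_two_div_factorial {k : ℕ} (hk : 1 ≤ k) :
    (k : ℝ) ^ (k - 2) / (k - 1).factorial = k ^ (k - 1) / k.factorial := by
  obtain ⟨j, rfl⟩ := Nat.exists_eq_add_of_le' hk
  rcases j with _ | j
  · simp
  · rw [show j + 1 + 1 - 2 = j by omega, Nat.factorial_succ (j + 1)]
    push_cast
    field_simp
    ring

theorem choose_mul_div_pow_le {N k : ℕ} {γ : ℝ} (hN : 0 < N) (hγ : 0 ≤ γ) (hk : 1 ≤ k) :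
    ((N - 1).choose (k - 1) : ℝ) * k ^ (k - 2) * (γ / N) ^ (k - 1) ≤
      k ^ (k - 1) / k.factorial * γ ^ (k - 1) := by
  have hchoose : ((N - 1).choose (k - 1) : ℝ) ≤ (N : ℝ) ^ (k - 1) / (k - 1).factorial :=
    (Nat.choose_le_pow_div _ _).trans (by gcongr; exact_mod_cast Nat.sub_le N 1)
  calc ((N - 1).choose (k - 1) : ℝ) * k ^ (k - 2) * (γ / N) ^ (k - 1)
      ≤ (N : ℝ) ^ (k - 1) / (k - 1).factorial * k ^ (k - 2) * (γ / N) ^ (k - 1) := by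
        gcongr
    _ = k ^ (k - 1) / k.factorial * γ ^ (k - 1) := by
      rw [← pow_sub_two_div_factorial hk, div_pow]
      field_simp

/-- For `1 ≤ k ≤ N` and `0 ≤ γ ≤ N`,
`Pr(|C(x)| = k in G_{N,γ/N}) ≤ (k^{k−1}/k!)·γ^{k−1}·e^{−kγ+γk²/N}`. -/
theorem component_size_prob_upper_bound (N k : ℕ) (γ : ℝ)
    (hγ0 : 0 ≤ γ) (hγN : γ ≤ (N : ℝ)) (hk1 : 1 ≤ k) (hkN : k ≤ N)
    (x : Fin N) :
    bernoulliPr (γ / N)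
        {η : Sym2 (Fin N) → Bool | {y | (graphOf η).Reachable x y}.ncard = k} ≤
      ((k : ℝ) ^ (k - 1) / (Nat.factorial k : ℝ)) * γ ^ (k - 1) *
        Real.exp (-(k : ℝ) * γ + γ * (k : ℝ) ^ 2 / N) := by
  have hN : 0 < N := hk1.trans hkN
  have hp0 : 0 ≤ γ / N := by positivity
  have hp1 : γ / N ≤ 1 := (div_le_one (by exact_mod_cast hN)).2 hγN
  calc _ ≤ (N - 1).choose (k - 1) * k ^ (k - 2) *
        ((γ / N) ^ (k - 1) * (1 - γ / N) ^ (k * (N - k))) :=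
        bernoulliPr_ncard_reachable_le hp0 hp1 hk1 x
    _ = ((N - 1).choose (k - 1) * k ^ (k - 2) * (γ / N) ^ (k - 1)) *
        (1 - γ / N) ^ (k * (N - k)) := by ring
    _ ≤ _ := mul_le_mul (choose_mul_div_pow_le hN hγ0 hk1) (one_sub_div_pow_le_exp hN hγN hkN)
        (pow_nonneg (sub_nonneg.2 hp1) _) (by positivity)
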